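/- Let χ : ℝⁿ → ℝ be a kernel (satisfying (χ1), (χ2), (χ3) and m_0(χ) < ∞), and let f : ℝⁿ → ℝ be a bounded measurable function. If f is continuous at a point x̄ ∈ ℝⁿ, then lim_{w → ∞} (S_w f)(x̄) = f(x̄). -/

import Mathlib

/-!
Since `∑ₖ χ(· - k) = 1`, `SK n χ f w x - f x = ∑ₖ χ(wx - k) mₖ`, where `mₖ` is the mean of
`f - f x` over the cell `R_k^w`. If `f` is `η`-close to `f x` on the `δ`-ball around `x` and the
cells have diameter `< δ/2`, the cells with `‖wx - k‖ ≤ wδ/2` lie in that ball and contribute at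
most `m₀(χ) η`. On the remaining cells `|mₖ| ≤ 2B ≤ 2B (2‖wx - k‖/(wδ))^β`, so they contribute at
most `2B (2/(wδ))^β m_β(χ)`, which tends to `0` as `w → ∞`.
-/

open MeasureTheory Filter

noncomputable def latticePt (n : ℕ) (k : Fin n → ℤ) : EuclideanSpace ℝ (Fin n) :=
  WithLp.toLp 2 (fun i => (k i : ℝ))

/-- Discrete absolute moment of order `β`. -/
noncomputable def mom (n : ℕ) (χ : EuclideanSpace ℝ (Fin n) → ℝ) (β : ℝ) : ENNReal :=
  ⨆ u : EuclideanSpace ℝ (Fin n), ∑' k : Fin n → ℤ,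
    ENNReal.ofReal (|χ (u - latticePt n k)| * ‖u - latticePt n k‖ ^ β)

/-- The cell `R_k^w`. -/
def cell (n : ℕ) (w : ℝ) (k : Fin n → ℤ) : Set (EuclideanSpace ℝ (Fin n)) :=
  {u | ∀ i, u i ∈ Set.Icc ((k i : ℝ) / w) (((k i : ℝ) + 1) / w)}

/-- Sampling Kantorovich operator. -/
noncomputable def SK (n : ℕ) (χ f : EuclideanSpace ℝ (Fin n) → ℝ) (w : ℝ)
    (x : EuclideanSpace ℝ (Fin n)) : ℝ :=
  ∑' k : Fin n → ℤ, χ (w • x - latticePt n k) * (w ^ n * ∫ u in cell n w k, f u)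

open Topology

lemma norm_le_sqrt_card_mul_of_abs_le {ι : Type*} [Fintype ι] {x : EuclideanSpace ℝ ι} {r : ℝ}
    (h : ∀ i, |x i| ≤ r) : ‖x‖ ≤ √(Fintype.card ι) * r := by
  rcases isEmpty_or_nonempty ι with _ | ⟨⟨i₀⟩⟩
  · simp [Subsingleton.elim x 0]
  have hr : 0 ≤ r := (abs_nonneg _).trans (h i₀)
  rw [EuclideanSpace.norm_eq, ← Real.sqrt_sq hr, ← Real.sqrt_mul (Nat.cast_nonneg _)]
  gcongr
  calc ∑ i, ‖x i‖ ^ 2 ≤ ∑ _i : ι, r ^ 2 := by gcongr with i; exact h i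
    _ = Fintype.card ι * r ^ 2 := by simp

lemma abs_tsum_mul_le {ι : Type*} {c a t : ι → ℝ} {η C : ℝ} (hc : Summable fun i => |c i|)
    (hct : Summable fun i => |c i| * t i) (ha : ∀ i, |a i| ≤ η + C * t i) :
    |∑' i, c i * a i| ≤ (∑' i, |c i|) * η + C * ∑' i, |c i| * t i := by
  have hbound : ∀ i, ‖c i * a i‖ ≤ |c i| * η + C * (|c i| * t i) := fun i =>
    calc ‖c i * a i‖ = |c i| * |a i| := by rw [Real.norm_eq_abs, abs_mul]
      _ ≤ |c i| * (η + C * t i) := mul_le_mul_of_nonneg_left (ha i) (abs_nonneg _)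
      _ = |c i| * η + C * (|c i| * t i) := by ring
  have hsum := (hc.mul_right η).add (hct.mul_left C)
  have hnorm : Summable fun i => ‖c i * a i‖ :=
    hsum.of_nonneg_of_le (fun i => norm_nonneg _) hbound
  calc |∑' i, c i * a i| ≤ ∑' i, ‖c i * a i‖ := norm_tsum_le_tsum_norm hnorm
    _ ≤ ∑' i, (|c i| * η + C * (|c i| * t i)) := hnorm.tsum_le_tsum hbound hsum
    _ = (∑' i, |c i|) * η + C * ∑' i, |c i| * t i := by
      rw [(hc.mul_right η).tsum_add (hct.mul_left C), tsum_mul_right, tsum_mul_left]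

section Moments

variable {n : ℕ} {χ : EuclideanSpace ℝ (Fin n) → ℝ} {β : ℝ}

lemma tsum_ofReal_le_mom (u : EuclideanSpace ℝ (Fin n)) :
    ∑' k, ENNReal.ofReal (|χ (u - latticePt n k)| * ‖u - latticePt n k‖ ^ β) ≤ mom n χ β :=
  le_iSup (fun u => ∑' k : Fin n → ℤ,
    ENNReal.ofReal (|χ (u - latticePt n k)| * ‖u - latticePt n k‖ ^ β)) u

lemma summable_of_mom_lt_top (h : mom n χ β < ⊤) (u : EuclideanSpace ℝ (Fin n)) :
    Summable fun k => |χ (u - latticePt n k)| * ‖u - latticePt n k‖ ^ β :=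
  (ENNReal.summable_toReal ((tsum_ofReal_le_mom u).trans_lt h).ne).congr fun _ =>
    ENNReal.toReal_ofReal (by positivity)

lemma tsum_le_toReal_mom (h : mom n χ β < ⊤) (u : EuclideanSpace ℝ (Fin n)) :
    ∑' k, |χ (u - latticePt n k)| * ‖u - latticePt n k‖ ^ β ≤ (mom n χ β).toReal := by
  rw [← ENNReal.ofReal_le_iff_le_toReal h.ne,
    ENNReal.ofReal_tsum_of_nonneg (fun _ => by positivity) (summable_of_mom_lt_top h u)]
  exact tsum_ofReal_le_mom u

lemma summable_abs_of_mom_zero_lt_top (h : mom n χ 0 < ⊤) (u : EuclideanSpace ℝ (Fin n)) :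
    Summable fun k => |χ (u - latticePt n k)| := by
  simpa using summable_of_mom_lt_top h u

lemma tsum_abs_le_toReal_mom_zero (h : mom n χ 0 < ⊤) (u : EuclideanSpace ℝ (Fin n)) :
    ∑' k, |χ (u - latticePt n k)| ≤ (mom n χ 0).toReal := by
  simpa using tsum_le_toReal_mom h u

end Moments

section Cells

variable {n : ℕ} {w : ℝ}

lemma cell_eq_preimage (n : ℕ) (w : ℝ) (k : Fin n → ℤ) :
    cell n w k = (MeasurableEquiv.toLp 2 (Fin n → ℝ)).symm ⁻¹'
      Set.univ.pi fun i => Set.Icc ((k i : ℝ) / w) (((k i : ℝ) + 1) / w) := by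
  ext u
  simp only [cell, Set.mem_ofPred_eq, Set.mem_preimage, Set.mem_univ_pi]
  rfl

lemma measurableSet_cell (n : ℕ) (w : ℝ) (k : Fin n → ℤ) : MeasurableSet (cell n w k) := by
  rw [cell_eq_preimage]
  exact (MeasurableEquiv.toLp 2 (Fin n → ℝ)).symm.measurable
    (MeasurableSet.univ_pi fun _ => measurableSet_Icc)

lemma volume_cell (hw : 0 < w) (k : Fin n → ℤ) :
    volume (cell n w k) = ENNReal.ofReal (w⁻¹ ^ n) := by
  rw [cell_eq_preimage,
    (EuclideanSpace.volume_preserving_symm_measurableEquiv_toLp (Fin n)).measure_preimage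
      (MeasurableSet.univ_pi fun _ => measurableSet_Icc).nullMeasurableSet,
    volume_pi_pi]
  have hside : ∀ i, volume (Set.Icc ((k i : ℝ) / w) (((k i : ℝ) + 1) / w)) = ENNReal.ofReal w⁻¹ := by
    intro i
    rw [Real.volume_Icc]
    congr 1
    field_simp
    ring
  simp only [hside, Finset.prod_const, Finset.card_univ, Fintype.card_fin]
  rw [← ENNReal.ofReal_pow (by positivity)]

lemma volume_cell_lt_top (hw : 0 < w) (k : Fin n → ℤ) : volume (cell n w k) < ⊤ := by
  rw [volume_cell hw]
  exact ENNReal.ofReal_lt_top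

lemma measureReal_cell (hw : 0 < w) (k : Fin n → ℤ) : volume.real (cell n w k) = w⁻¹ ^ n := by
  rw [measureReal_def, volume_cell hw, ENNReal.toReal_ofReal (by positivity)]

lemma norm_sub_inv_smul_latticePt_le {k : Fin n → ℤ}
    {u : EuclideanSpace ℝ (Fin n)} (hu : u ∈ cell n w k) :
    ‖u - w⁻¹ • latticePt n k‖ ≤ √n / w := by
  have hcoord : ∀ i, |(u - w⁻¹ • latticePt n k) i| ≤ 1 / w := by
    intro i
    obtain ⟨hlo, hhi⟩ := hu i
    have hi : (u - w⁻¹ • latticePt n k) i = u i - (k i : ℝ) / w := by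
      simp [latticePt, div_eq_inv_mul]
    rw [hi, abs_le]
    constructor <;> linarith [add_div (k i : ℝ) 1 w]
  simpa [div_eq_mul_one_div (√n)] using norm_le_sqrt_card_mul_of_abs_le hcoord

lemma dist_lt_of_mem_cell (hw : 0 < w) {δ : ℝ} (hmesh : √n / w < δ / 2)
    {x u : EuclideanSpace ℝ (Fin n)} {k : Fin n → ℤ}
    (hk : ‖w • x - latticePt n k‖ ≤ w * δ / 2) (hu : u ∈ cell n w k) : dist u x < δ := by
  have hcenter : ‖w⁻¹ • latticePt n k - x‖ ≤ δ / 2 := by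
    have heq : w⁻¹ • latticePt n k - x = w⁻¹ • (latticePt n k - w • x) := by
      rw [smul_sub, smul_smul, inv_mul_cancel₀ hw.ne', one_smul]
    rw [heq, norm_smul, norm_sub_rev, Real.norm_of_nonneg (inv_nonneg.mpr hw.le)]
    calc w⁻¹ * ‖w • x - latticePt n k‖ ≤ w⁻¹ * (w * δ / 2) := by gcongr
      _ = δ / 2 := by field_simp
  calc dist u x ≤ ‖u - w⁻¹ • latticePt n k‖ + ‖w⁻¹ • latticePt n k - x‖ := by
        rw [← dist_eq_norm, ← dist_eq_norm]; exact dist_triangle _ _ _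
    _ < δ / 2 + δ / 2 := by
        linarith [norm_sub_inv_smul_latticePt_le hu]
    _ = δ := add_halves δ

end Cells

section CellMean

variable {n : ℕ} {w : ℝ}

noncomputable def cellMean (n : ℕ) (w : ℝ) (g : EuclideanSpace ℝ (Fin n) → ℝ)
    (k : Fin n → ℤ) : ℝ :=
  w ^ n * ∫ u in cell n w k, g u

lemma abs_cellMean_le (hw : 0 < w) {k : Fin n → ℤ} {g : EuclideanSpace ℝ (Fin n) → ℝ} {C : ℝ}
    (hC : ∀ u ∈ cell n w k, |g u| ≤ C) : |cellMean n w g k| ≤ C := by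
  have hint : ‖∫ u in cell n w k, g u‖ ≤ C * volume.real (cell n w k) :=
    norm_setIntegral_le_of_norm_le_const (volume_cell_lt_top hw k) hC
  rw [measureReal_cell hw, Real.norm_eq_abs] at hint
  rw [cellMean, abs_mul, abs_of_pos (by positivity)]
  calc w ^ n * |∫ u in cell n w k, g u| ≤ w ^ n * (C * w⁻¹ ^ n) := by gcongr
    _ = C := by rw [mul_left_comm, ← mul_pow, mul_inv_cancel₀ hw.ne', one_pow, mul_one]

lemma cellMean_sub_const (hw : 0 < w) {k : Fin n → ℤ} {g : EuclideanSpace ℝ (Fin n) → ℝ}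
    (hg : IntegrableOn g (cell n w k)) (c : ℝ) :
    cellMean n w (fun u => g u - c) k = cellMean n w g k - c := by
  rw [cellMean, cellMean, integral_sub hg (integrableOn_const (volume_cell_lt_top hw k).ne),
    setIntegral_const, measureReal_cell hw, smul_eq_mul, mul_sub, ← mul_assoc, ← mul_pow,
    mul_inv_cancel₀ hw.ne', one_pow, one_mul]

lemma integrableOn_cell_of_abs_le (hw : 0 < w) (k : Fin n → ℤ)
    {g : EuclideanSpace ℝ (Fin n) → ℝ} (hg : Measurable g) {C : ℝ} (hC : ∀ u, |g u| ≤ C) :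
    IntegrableOn g (cell n w k) :=
  .of_bound (volume_cell_lt_top hw k) hg.aestronglyMeasurable C (.of_forall hC)

lemma abs_cellMean_sub_le {f : EuclideanSpace ℝ (Fin n) → ℝ} {x : EuclideanSpace ℝ (Fin n)}
    {B η δ β : ℝ} (hB : ∀ u, |f u| ≤ B) (hfδ : ∀ ⦃u⦄, dist u x < δ → dist (f u) (f x) < η)
    (hβ : 0 < β) (hw : 0 < w) (hmesh : √n / w < δ / 2) (k : Fin n → ℤ) :
    |cellMean n w (fun u => f u - f x) k|
      ≤ η + 2 * B * (2 / δ / w) ^ β * ‖w • x - latticePt n k‖ ^ β := by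
  set t := ‖w • x - latticePt n k‖
  have hδ : 0 < δ := by linarith [show 0 ≤ √n / w by positivity]
  have hη : 0 < η := (dist_nonneg).trans_lt (hfδ (dist_self x ▸ hδ))
  have hB0 : 0 ≤ B := (abs_nonneg _).trans (hB x)
  rcases le_or_gt t (w * δ / 2) with hnear | hfar
  · have := abs_cellMean_le hw fun u hu => (hfδ (dist_lt_of_mem_cell hw hmesh hnear hu)).le
    linarith [show 0 ≤ 2 * B * (2 / δ / w) ^ β * t ^ β by positivity]
  · have hone : 1 ≤ 2 / δ / w * t := by
      rw [div_div, div_mul_eq_mul_div, le_div_iff₀ (by positivity)]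
      linarith
    calc |cellMean n w (fun u => f u - f x) k| ≤ 2 * B := abs_cellMean_le hw fun u _ =>
          (abs_sub _ _).trans (by linarith [hB u, hB x])
      _ ≤ 2 * B * (2 / δ / w * t) ^ β := le_mul_of_one_le_right (by positivity)
          (Real.one_le_rpow hone hβ.le)
      _ ≤ η + 2 * B * (2 / δ / w) ^ β * t ^ β := by
          rw [Real.mul_rpow (by positivity) (norm_nonneg _), ← mul_assoc]
          linarith

end CellMean

section Operator

variable {n : ℕ} {χ f : EuclideanSpace ℝ (Fin n) → ℝ} {w B : ℝ}

lemma SK_sub_eq_tsum (hχ2 : ∀ y, ∑' k : Fin n → ℤ, χ (y - latticePt n k) = 1)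
    (hχ0 : mom n χ 0 < ⊤) (hf : Measurable f) (hB : ∀ u, |f u| ≤ B) (hw : 0 < w)
    (x : EuclideanSpace ℝ (Fin n)) :
    SK n χ f w x - f x
      = ∑' k, χ (w • x - latticePt n k) * cellMean n w (fun u => f u - f x) k := by
  have habs := summable_abs_of_mom_zero_lt_top hχ0 (w • x)
  have hmean : Summable fun k => χ (w • x - latticePt n k) * cellMean n w f k :=
    (habs.mul_right B).of_norm_bounded fun k => by
      rw [Real.norm_eq_abs, abs_mul]
      exact mul_le_mul_of_nonneg_left (abs_cellMean_le hw fun u _ => hB u) (abs_nonneg _)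
  have hconst : Summable fun k => χ (w • x - latticePt n k) * f x := habs.of_abs.mul_right _
  calc SK n χ f w x - f x
      = ∑' k, χ (w • x - latticePt n k) * cellMean n w f k
        - ∑' k, χ (w • x - latticePt n k) * f x := by
        rw [tsum_mul_right, hχ2, one_mul]; rfl
    _ = _ := by
        rw [← hmean.tsum_sub hconst]
        simp_rw [cellMean_sub_const hw (integrableOn_cell_of_abs_le hw _ hf hB), mul_sub]

lemma abs_SK_sub_le (hχ2 : ∀ y, ∑' k : Fin n → ℤ, χ (y - latticePt n k) = 1)
    (hχ0 : mom n χ 0 < ⊤) {β : ℝ} (hβ : 0 < β) (hχβ : mom n χ β < ⊤) (hf : Measurable f)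
    (hB : ∀ u, |f u| ≤ B) {x : EuclideanSpace ℝ (Fin n)} {η δ : ℝ}
    (hfδ : ∀ ⦃u⦄, dist u x < δ → dist (f u) (f x) < η) (hw : 0 < w) (hmesh : √n / w < δ / 2) :
    |SK n χ f w x - f x|
      ≤ (mom n χ 0).toReal * η + 2 * B * (2 / δ / w) ^ β * (mom n χ β).toReal := by
  have hδ : 0 < δ := by linarith [show 0 ≤ √n / w by positivity]
  have hη : 0 ≤ η := dist_nonneg.trans (hfδ (dist_self x ▸ hδ)).le
  have hB0 : 0 ≤ B := (abs_nonneg _).trans (hB x)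
  rw [SK_sub_eq_tsum hχ2 hχ0 hf hB hw]
  refine (abs_tsum_mul_le (summable_abs_of_mom_zero_lt_top hχ0 _) (summable_of_mom_lt_top hχβ _)
    (abs_cellMean_sub_le hB hfδ hβ hw hmesh)).trans ?_
  exact add_le_add (mul_le_mul_of_nonneg_right (tsum_abs_le_toReal_mom_zero hχ0 _) hη)
    (mul_le_mul_of_nonneg_left (tsum_le_toReal_mom hχβ _) (by positivity))

end Operator

theorem stmt0_general (n : ℕ) (χ f : EuclideanSpace ℝ (Fin n) → ℝ)
    (hχ2 : ∀ y : EuclideanSpace ℝ (Fin n), ∑' k : Fin n → ℤ, χ (y - latticePt n k) = 1)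
    (hχ3 : ∃ β > (0:ℝ), mom n χ β < ⊤)
    (hχ0 : mom n χ 0 < ⊤)
    (hfmeas : Measurable f) (hfbd : ∃ B : ℝ, ∀ x, |f x| ≤ B)
    (x₀ : EuclideanSpace ℝ (Fin n)) (hcont : ContinuousAt f x₀) :
    Tendsto (fun w : ℝ => SK n χ f w x₀) atTop (nhds (f x₀)) := by
  obtain ⟨B, hB⟩ := hfbd
  obtain ⟨β, hβ, hχβ⟩ := hχ3
  set M₀ := (mom n χ 0).toReal
  have hM₀ : 0 ≤ M₀ := ENNReal.toReal_nonneg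
  rw [Metric.tendsto_nhds]
  intro ε hε
  set η := ε / 2 / (M₀ + 1)
  obtain ⟨δ, hδ, hfδ⟩ := Metric.continuousAt_iff.mp hcont η (by positivity)
  have hmesh : Tendsto (fun w : ℝ => √n / w) atTop (𝓝 0) :=
    tendsto_const_nhds.div_atTop tendsto_id
  have htail : Tendsto (fun w : ℝ => 2 * B * (2 / δ / w) ^ β * (mom n χ β).toReal) atTop (𝓝 0) := by
    simpa using (((tendsto_const_nhds.div_atTop tendsto_id).rpow_const_nhds_zero hβ).const_mul
      (2 * B)).mul_const (mom n χ β).toReal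
  have hM₀η : M₀ * η ≤ ε / 2 :=
    (mul_le_mul_of_nonneg_right (le_add_of_nonneg_right zero_le_one) (by positivity)).trans_eq
      (mul_div_cancel₀ _ (by positivity))
  filter_upwards [eventually_gt_atTop 0, hmesh.eventually (gt_mem_nhds (half_pos hδ)),
    htail.eventually (gt_mem_nhds (half_pos hε))] with w hw hw_mesh hw_tail
  rw [Real.dist_eq]
  calc |SK n χ f w x₀ - f x₀|
      ≤ M₀ * η + 2 * B * (2 / δ / w) ^ β * (mom n χ β).toReal :=
        abs_SK_sub_le hχ2 hχ0 hβ hχβ hfmeas hB hfδ hw hw_mesh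
    _ < ε / 2 + ε / 2 := add_lt_add_of_le_of_lt hM₀η hw_tail
    _ = ε := add_halves ε

theorem stmt0 (n : ℕ) (χ f : EuclideanSpace ℝ (Fin n) → ℝ)
    (hχmeas : Measurable χ)
    (hχ1 : Integrable χ)
    (hχbd : ∃ δ > (0:ℝ), ∃ M : ℝ, ∀ x : EuclideanSpace ℝ (Fin n), ‖x‖ ≤ δ → |χ x| ≤ M)
    (hχ2 : ∀ y : EuclideanSpace ℝ (Fin n), ∑' k : Fin n → ℤ, χ (y - latticePt n k) = 1)
    (hχ3 : ∃ β > (0:ℝ), mom n χ β < ⊤)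
    (hχ0 : mom n χ 0 < ⊤)
    (hfmeas : Measurable f) (hfbd : ∃ B : ℝ, ∀ x, |f x| ≤ B)
    (x₀ : EuclideanSpace ℝ (Fin n)) (hcont : ContinuousAt f x₀) :
    Tendsto (fun w : ℝ => SK n χ f w x₀) atTop (nhds (f x₀)) :=
  stmt0_general n χ f hχ2 hχ3 hχ0 hfmeas hfbd x₀ hcont
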